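/- arXiv:math/9810089 — 2 statements merged into one kernel-verified Lean document; each statement's English description precedes it below -/
import Mathlib

section
/- If G = ⟨g₁, …, g_N⟩ is a rational semigroup generated by finitely many nonconstant rational maps, then J(G) = ⋃_{i=1}^N g_i⁻¹(J(G)) and N(G) = ⋂_{i=1}^N g_i⁻¹(N(G)). -/
open OnePoint Filter Topology Set

noncomputable section

/-- The Riemann sphere as the one-point compactification of `ℂ`. -/
abbrev Sphere := OnePoint ℂ

/-- The spherical (chordal) metric on the Riemann sphere. -/
noncomputable def sm : Sphere → Sphere → ℝ
  | OnePoint.some z, OnePoint.some w =>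
      2 * ‖z - w‖ / Real.sqrt ((1 + ‖z‖ ^ 2) * (1 + ‖w‖ ^ 2))
  | OnePoint.some z, ∞ => 2 / Real.sqrt (1 + ‖z‖ ^ 2)
  | ∞, OnePoint.some w => 2 / Real.sqrt (1 + ‖w‖ ^ 2)
  | ∞, ∞ => 0

/-- Spherical diameter of a set. -/
noncomputable def sdiam (S : Set Sphere) : ℝ :=
  sSup {d : ℝ | ∃ z ∈ S, ∃ w ∈ S, d = sm z w}

/-- `f` is a rational map on the Riemann sphere: it is continuous and is given by a
quotient of polynomials away from the zeros of the denominator. -/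
def IsRationalMap (f : Sphere → Sphere) : Prop :=
  Continuous f ∧ ∃ p q : Polynomial ℂ, q ≠ 0 ∧
    ∀ z : ℂ, q.eval z ≠ 0 → f (OnePoint.some z) = OnePoint.some (p.eval z / q.eval z)

/-- `f` is a rational map of degree at least two. -/
def IsRationalMapDegGe2 (f : Sphere → Sphere) : Prop :=
  Continuous f ∧ ∃ p q : Polynomial ℂ, q ≠ 0 ∧ IsCoprime p q ∧
    2 ≤ max p.natDegree q.natDegree ∧
    ∀ z : ℂ, q.eval z ≠ 0 → f (OnePoint.some z) = OnePoint.some (p.eval z / q.eval z)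

/-- `f` is a Möbius transformation `z ↦ (az+b)/(cz+d)`, `ad - bc ≠ 0`. -/
def IsMoebius (f : Sphere → Sphere) : Prop :=
  Continuous f ∧ ∃ a b c d : ℂ, a * d - b * c ≠ 0 ∧
    ∀ z : ℂ, c * z + d ≠ 0 → f (OnePoint.some z) = OnePoint.some ((a * z + b) / (c * z + d))

/-- `f` is a nonconstant function. -/
def Nonconst (f : Sphere → Sphere) : Prop := ∃ z w : Sphere, f z ≠ f w

/-- `G` is a rational semigroup: a set of nonconstant rational maps closed under composition. -/
structure IsRatSemigroup (G : Set (Sphere → Sphere)) : Prop where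
  comp_mem : ∀ f ∈ G, ∀ g ∈ G, (f ∘ g) ∈ G
  rat : ∀ f ∈ G, IsRationalMap f
  noncst : ∀ f ∈ G, Nonconst f

/-- The semigroup (under composition) generated by a set of self-maps. -/
inductive semigroupGen {α : Type*} (S : Set (α → α)) : (α → α) → Prop
  | base : ∀ f ∈ S, semigroupGen S f
  | comp : ∀ f g, semigroupGen S f → semigroupGen S g → semigroupGen S (f ∘ g)

/-- The group (under composition) generated by a set of self-maps. -/
inductive groupGen {α : Type*} (S : Set (α → α)) : (α → α) → Prop
  | base : ∀ f ∈ S, groupGen S f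
  | inv : ∀ f g, groupGen S f → f ∘ g = id → g ∘ f = id → groupGen S g
  | comp : ∀ f g, groupGen S f → groupGen S g → groupGen S (f ∘ g)

/-- The family `G` is normal on the open set `U`: every sequence in `G` has a subsequence
converging uniformly on compact subsets of `U` with respect to the spherical metric. -/
def NormalOn (G : Set (Sphere → Sphere)) (U : Set Sphere) : Prop :=
  ∀ F : ℕ → (Sphere → Sphere), (∀ n, F n ∈ G) →
    ∃ φ : ℕ → ℕ, StrictMono φ ∧ ∃ g : Sphere → Sphere,
      ∀ K ⊆ U, IsCompact K → ∀ ε > 0, ∃ N : ℕ, ∀ n ≥ N, ∀ z ∈ K, sm (F (φ n) z) (g z) < ε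

/-- The set of normality (Fatou set) of `G`. -/
def Fatou (G : Set (Sphere → Sphere)) : Set Sphere :=
  {z | ∃ U : Set Sphere, IsOpen U ∧ z ∈ U ∧ NormalOn G U}

/-- The Julia set of `G`. -/
def Julia (G : Set (Sphere → Sphere)) : Set Sphere := (Fatou G)ᶜ

/-- The Julia set of a single map: the Julia set of the cyclic semigroup it generates. -/
def Julia1 (f : Sphere → Sphere) : Set Sphere := Julia {g | semigroupGen {f} g}

/-- The Fatou set of a single map. -/
def Fatou1 (f : Sphere → Sphere) : Set Sphere := Fatou {g | semigroupGen {f} g}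

/-- `G` is non-elementary: its Julia set has at least three points. -/
def NonElementary (G : Set (Sphere → Sphere)) : Prop :=
  ∃ a b c : Sphere, a ∈ Julia G ∧ b ∈ Julia G ∧ c ∈ Julia G ∧ a ≠ b ∧ a ≠ c ∧ b ≠ c

/-- `w` is a fixed point of `g` with `|multiplier| = lam` (measured via the spherical metric;
at a fixed point this agrees with the chart multiplier). -/
def FixedPtWithMultiplier (g : Sphere → Sphere) (w : Sphere) (lam : ℝ) : Prop :=
  g w = w ∧ Tendsto (fun z => sm (g z) w / sm z w) (𝓝[≠] w) (𝓝 lam)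

/-- `w` is a repelling fixed point of `g`. -/
def RepellingFixedPt (g : Sphere → Sphere) (w : Sphere) : Prop :=
  ∃ lam : ℝ, 1 < lam ∧ FixedPtWithMultiplier g w lam

/-- `w` is an attracting (or superattracting) fixed point of `g`. -/
def AttractingFixedPt (g : Sphere → Sphere) (w : Sphere) : Prop :=
  ∃ lam : ℝ, lam < 1 ∧ FixedPtWithMultiplier g w lam

/-- `w` is a superattracting fixed point of `g` (multiplier `0`). -/
def SuperAttractingFixedPt (g : Sphere → Sphere) (w : Sphere) : Prop :=
  FixedPtWithMultiplier g w 0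

/-- `f` is a loxodromic Möbius map: a Möbius map with an attracting and a repelling
fixed point. -/
def IsLoxodromic (f : Sphere → Sphere) : Prop :=
  IsMoebius f ∧ ∃ p q : Sphere, p ≠ q ∧ AttractingFixedPt f p ∧ RepellingFixedPt f q

/-- The exceptional set of a rational map of degree at least two: the points with
backward orbit containing at most two points. -/
def ExcSet (f : Sphere → Sphere) : Set Sphere :=
  {z | ∃ a b : Sphere, {w | ∃ n : ℕ, 1 ≤ n ∧ f^[n] w = z} ⊆ {a, b}}

/-- The finite chart on the sphere (junk value `0` at `∞`). -/
def down : Sphere → ℂ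
  | OnePoint.some z => z
  | ∞ => 0

/-- The map `z ↦ 1/z` on the Riemann sphere. -/
def invS : Sphere → Sphere
  | OnePoint.some z => if z = 0 then ∞ else OnePoint.some z⁻¹
  | ∞ => OnePoint.some 0

/-- `f` is holomorphic at `p` as a self-map of the Riemann sphere (in charts). -/
def SphHoloAt (f : Sphere → Sphere) (p : Sphere) : Prop :=
  ContinuousAt f p ∧
    ((p ≠ ∞ → f p ≠ ∞ → DifferentiableAt ℂ (fun w : ℂ => down (f (OnePoint.some w))) (down p)) ∧
     (p ≠ ∞ → f p = ∞ → DifferentiableAt ℂ (fun w : ℂ => down (invS (f (OnePoint.some w)))) (down p)) ∧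
     (p = ∞ → f p ≠ ∞ → DifferentiableAt ℂ (fun w : ℂ => down (f (invS (OnePoint.some w)))) 0) ∧
     (p = ∞ → f p = ∞ → DifferentiableAt ℂ (fun w : ℂ => down (invS (f (invS (OnePoint.some w))))) 0))

/-- `f` maps `A` conformally (holomorphically and bijectively) onto `B`. -/
def ConformalBijOn (f : Sphere → Sphere) (A B : Set Sphere) : Prop :=
  Set.BijOn f A B ∧ ∀ z ∈ A, SphHoloAt f z

/-- The genuine round annulus `{r₁ < |z| < r₂}`, viewed in the sphere. -/
def roundAnn (r₁ r₂ : ℝ) : Set Sphere :=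
  {z | ∃ w : ℂ, z = OnePoint.some w ∧ r₁ < ‖w‖ ∧ ‖w‖ < r₂}

/-- `A` is a conformal annulus of modulus `m`: an open set conformally equivalent to a
round annulus `{r₁ < |z| < r₂}` with `m = (1/2π) log (r₂/r₁)`. -/
def IsConfAnnulusWithMod (A : Set Sphere) (m : ℝ) : Prop :=
  IsOpen A ∧ ∃ r₁ r₂ : ℝ, 0 < r₁ ∧ r₁ < r₂ ∧
    m = (2 * Real.pi)⁻¹ * Real.log (r₂ / r₁) ∧
    ∃ φ : Sphere → Sphere, ConformalBijOn φ A (roundAnn r₁ r₂)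

/-- The annulus `A` separates the set `F`: `F` misses `A` and meets at least two
connected components of the complement of `A`. -/
def Separates (A F : Set Sphere) : Prop :=
  F ∩ A = ∅ ∧ ∃ x ∈ F, ∃ y ∈ F,
    connectedComponentIn Aᶜ x ≠ connectedComponentIn Aᶜ y

/-- `F` is uniformly perfect: it has at least two points and there is a uniform upper
bound on the moduli of conformal annuli separating `F`. -/
def UniformlyPerfect (F : Set Sphere) : Prop :=
  F.Nontrivial ∧ ∃ B : ℝ, ∀ A : Set Sphere, ∀ m : ℝ,
    IsConfAnnulusWithMod A m → Separates A F → m ≤ B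

/-- A uniform Lipschitz bound (w.r.t. the spherical metric) for a family of maps. -/
def LipBddBy (S : Set (Sphere → Sphere)) (C : ℝ) : Prop :=
  ∀ f ∈ S, ∀ z w : Sphere, sm (f z) (f w) ≤ C * sm z w

/-- The group `G` acts properly discontinuously at some point of the sphere. -/
def ProperlyDiscontinuousSomewhere (G : Set (Sphere → Sphere)) : Prop :=
  ∃ z₀ : Sphere, ∃ U : Set Sphere, IsOpen U ∧ z₀ ∈ U ∧
    {f | f ∈ G ∧ (f '' U ∩ U).Nonempty}.Finite

/-- `G` is a Kleinian group: a group of Möbius maps acting properly discontinuously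
at some point. -/
def IsKleinian (G : Set (Sphere → Sphere)) : Prop :=
  (∀ f ∈ G, IsMoebius f) ∧ id ∈ G ∧
    (∀ f ∈ G, ∀ g ∈ G, (f ∘ g) ∈ G) ∧
    (∀ f ∈ G, ∃ g ∈ G, f ∘ g = id ∧ g ∘ f = id) ∧
    ProperlyDiscontinuousSomewhere G

end

/-!
Every element of `G = ⟨g₁, …, g_N⟩` is either a generator `g_i` or `h ∘ g_i` with `h ∈ G`.
Hence normality of `G` near each `g_i z` pulls back to normality near `z`: a sequence in `G` has
a subsequence of one of finitely many shapes `h_n ∘ g_i` (or constantly `g_i`). Conversely,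
`h ∘ g_i ∈ G` for `h ∈ G`, so normality of `G` near `z` pushes forward to `g_i` of a closed
neighbourhood of `z`, which is a neighbourhood of `g_i z` because a nonconstant rational map is
open: in the charts `w` and `1/w` it is meromorphic, and the open mapping theorem applies to it
or to its reciprocal. The statement about `J(G)` is the complement of the one about `N(G)`.
-/

open Polynomial

lemma MeromorphicAt.exists_analyticAt_eventuallyEq_or_inv {𝕜 : Type*} [NontriviallyNormedField 𝕜]
    {h : 𝕜 → 𝕜} {a : 𝕜} (hh : MeromorphicAt h a) :
    ∃ k : 𝕜 → 𝕜, AnalyticAt 𝕜 k a ∧ (h =ᶠ[𝓝[≠] a] k ∨ h⁻¹ =ᶠ[𝓝[≠] a] k) := by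
  rcases le_or_gt 0 (meromorphicOrderAt h a) with h0 | h0
  · obtain ⟨k, hk, hhk⟩ := hh.meromorphicOrderAt_nonneg_iff.1 h0
    exact ⟨k, hk, .inl hhk⟩
  · have : 0 ≤ meromorphicOrderAt h⁻¹ a := by
      rw [meromorphicOrderAt_inv]
      exact (LinearOrderedAddCommGroupWithTop.neg_pos.2 (.inl h0)).le
    obtain ⟨k, hk, hhk⟩ := hh.inv.meromorphicOrderAt_nonneg_iff.1 this
    exact ⟨k, hk, .inr hhk⟩

lemma MeromorphicAt.polynomial_eval {𝕜 : Type*} [NontriviallyNormedField 𝕜] {g : 𝕜 → 𝕜} {x : 𝕜}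
    (hg : MeromorphicAt g x) (p : 𝕜[X]) : MeromorphicAt (fun w => p.eval (g w)) x := by
  induction p using Polynomial.induction_on' with
  | add p q hp hq => simpa only [eval_add, Pi.add_def] using hp.add hq
  | monomial n c =>
    simpa only [eval_monomial, Pi.mul_def, Pi.pow_apply] using
      (MeromorphicAt.const c x).mul (hg.pow n)

section LocalOpenness

variable {X Y Z : Type*} [TopologicalSpace X] [TopologicalSpace Y] [TopologicalSpace Z]

lemma nhds_le_map_of_homeomorph_comp (e : Y ≃ₜ Z) {f : X → Y} {x : X}
    (h : 𝓝 (e (f x)) ≤ map (e ∘ f) (𝓝 x)) : 𝓝 (f x) ≤ map f (𝓝 x) := by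
  simpa [← map_map, e.map_nhds_eq, Function.comp_def] using map_mono (m := e.symm) h

lemma nhds_le_map_of_comp_homeomorph (e : X ≃ₜ Y) {f : Y → Z} {x : X}
    (h : 𝓝 (f (e x)) ≤ map (f ∘ e) (𝓝 x)) : 𝓝 (f (e x)) ≤ map f (𝓝 (e x)) := by
  rwa [← e.map_nhds_eq, map_map]

end LocalOpenness

lemma invS_invS (x : Sphere) : invS (invS x) = x := by
  induction x using OnePoint.rec with
  | infty => simp [invS]
  | coe z => by_cases hz : z = 0 <;> simp [invS, hz]

lemma invS_coe_of_ne_zero {z : ℂ} (hz : z ≠ 0) : invS z = ((z⁻¹ : ℂ) : Sphere) := by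
  simp [invS, hz]

lemma continuous_invS : Continuous invS := by
  rw [OnePoint.continuous_iff, coclosedCompact_eq_cocompact, ← Metric.cobounded_eq_cocompact]
  refine ⟨?_, continuous_iff_continuousAt.2 fun z => ?_⟩
  · refine (continuous_coe.continuousAt.tendsto.comp tendsto_inv₀_cobounded).congr' ?_
    filter_upwards [Bornology.eventually_ne_cobounded 0] with z hz
    exact (invS_coe_of_ne_zero hz).symm
  by_cases hz : z = 0
  · subst hz
    have hinv : (fun z : ℂ => ((z⁻¹ : ℂ) : Sphere)) =ᶠ[𝓝[≠] 0] fun z => invS z :=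
      eventually_nhdsWithin_of_forall fun z hz => (invS_coe_of_ne_zero hz).symm
    rw [← continuousWithinAt_compl_self, ContinuousWithinAt, show invS (0 : ℂ) = ∞ by simp [invS]]
    refine (OnePoint.tendsto_coe_infty.comp ?_).congr' hinv
    rw [coclosedCompact_eq_cocompact, ← Metric.cobounded_eq_cocompact]
    exact tendsto_inv₀_nhdsNE_zero
  · exact (continuous_coe.continuousAt.comp (continuousAt_inv₀ hz)).congr
      (eventually_ne_nhds hz |>.mono fun w hw => (invS_coe_of_ne_zero hw).symm)

noncomputable def invSHomeomorph : Sphere ≃ₜ Sphere where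
  toFun := invS
  invFun := invS
  left_inv := invS_invS
  right_inv := invS_invS
  continuous_toFun := continuous_invS
  continuous_invFun := continuous_invS

@[simp]
lemma coe_invSHomeomorph : ⇑invSHomeomorph = invS := rfl

theorem nhds_le_map_of_eventuallyEq_analyticAt {f : Sphere → Sphere} {k : ℂ → ℂ} {a : ℂ}
    (hf : ContinuousAt f a) (hk : AnalyticAt ℂ k a) (hfk : ∀ᶠ w : ℂ in 𝓝[≠] a, f w = k w)
    (hnc : ∀ᶠ w : ℂ in 𝓝[≠] a, f w ≠ f a) :
    𝓝 (f a) ≤ map f (𝓝 (a : Sphere)) := by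
  have hfa : f a = k a :=
    tendsto_nhds_unique ((OnePoint.continuousAt_coe.1 hf).tendsto.mono_left nhdsWithin_le_nhds)
      (((continuous_coe.continuousAt.comp hk.continuousAt).tendsto.mono_left
        nhdsWithin_le_nhds).congr' (hfk.mono fun _ h => h.symm))
  have hfk' : (fun w : ℂ => f w) =ᶠ[𝓝 a] fun w => (k w : Sphere) := by
    rw [← nhdsNE_sup_pure]
    exact eventually_sup.2 ⟨hfk, hfa⟩
  have hk_open : 𝓝 (k a) ≤ map k (𝓝 a) := by
    refine hk.eventually_constant_or_nhds_le_map_nhds.resolve_left fun hconst => ?_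
    obtain ⟨w, hw, hfw, hkw⟩ := (hnc.and (hfk.and (nhdsWithin_le_nhds hconst))).exists
    exact hw (by rw [hfw, hkw, hfa])
  calc 𝓝 (f a) = map (↑) (𝓝 (k a)) := by rw [hfa, OnePoint.nhds_coe_eq]
    _ ≤ map (↑) (map k (𝓝 a)) := map_mono hk_open
    _ = map f (𝓝 (a : Sphere)) := by
      rw [OnePoint.nhds_coe_eq, map_map, map_map]
      exact (map_congr hfk').symm

theorem nhds_le_map_of_eventuallyEq_meromorphicAt {f : Sphere → Sphere} {h : ℂ → ℂ} {a : ℂ}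
    (hf : ContinuousAt f a) (hh : MeromorphicAt h a) (hfh : ∀ᶠ w : ℂ in 𝓝[≠] a, f w = h w)
    (hfib : ∀ y, {w : ℂ | f w = y}.Finite) :
    𝓝 (f a) ≤ map f (𝓝 (a : Sphere)) := by
  have hnc : ∀ y, ∀ᶠ w : ℂ in 𝓝[≠] a, f w ≠ y :=
    fun y => nhdsNE_le_cofinite a (hfib y).compl_mem_cofinite
  obtain ⟨k, hk, hhk | hhk⟩ := hh.exists_analyticAt_eventuallyEq_or_inv
  · refine nhds_le_map_of_eventuallyEq_analyticAt hf hk ?_ (hnc _)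
    filter_upwards [hfh, hhk] with w h₁ h₂
    rw [h₁, h₂]
  · refine nhds_le_map_of_homeomorph_comp invSHomeomorph
      (nhds_le_map_of_eventuallyEq_analyticAt (continuous_invS.continuousAt.comp hf) hk ?_ ?_)
    · filter_upwards [hfh, hhk, hnc ((0 : ℂ) : Sphere)] with w h₁ h₂ h₃
      have hw : h w ≠ 0 := fun h0 => h₃ (by rw [h₁, h0])
      simp [h₁, invS_coe_of_ne_zero hw, ← h₂]
    · filter_upwards [hnc (f a)] with w hw
      exact fun h => hw (invSHomeomorph.injective h)

theorem IsRationalMap.finite_fiber {f : Sphere → Sphere} (hf : IsRationalMap f)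
    (hnc : Nonconst f) (y : Sphere) : {w : ℂ | f w = y}.Finite := by
  obtain ⟨hcont, p, q, hq, hpq⟩ := hf
  have hroots : {w | q.IsRoot w}.Finite := finite_setOfPred_isRoot hq
  refine Set.not_infinite.1 fun hinf => ?_
  have hinf' : ({w : ℂ | f w = y} \ {w | q.IsRoot w}).Infinite := hinf.sdiff hroots
  obtain ⟨w₀, hw₀, hqw₀⟩ := hinf'.nonempty
  set c := p.eval w₀ / q.eval w₀
  have hy : y = c := by rw [← hw₀, hpq w₀ hqw₀]
  have hpc : p = C c * q := by
    refine sub_eq_zero.1 (eq_zero_of_infinite_isRoot _ (hinf'.mono fun w hw => ?_))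
    obtain ⟨hw, hqw⟩ := hw
    have : c = p.eval w / q.eval w := OnePoint.coe_injective (by rw [← hy, ← hw, hpq w hqw])
    simp [this, div_mul_cancel₀ _ hqw]
  have hfc : f = fun _ => (c : Sphere) := by
    refine hcont.ext_on (denseRange_coe.dense_image continuous_coe
      (hroots.countable.dense_compl ℂ)) continuous_const ?_
    rintro _ ⟨w, hw, rfl⟩
    rw [hpq w hw, hpc, eval_mul, eval_C, mul_div_cancel_right₀ _ hw]
  obtain ⟨z₁, z₂, hz⟩ := hnc
  exact hz (by rw [hfc])

theorem IsRationalMap.isOpenMap {f : Sphere → Sphere} (hf : IsRationalMap f)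
    (hnc : Nonconst f) : IsOpenMap f := by
  obtain ⟨hcont, p, q, hq, hpq⟩ := id hf
  have hroots : {w | q.IsRoot w}.Finite := finite_setOfPred_isRoot hq
  have hmero : ∀ {g : ℂ → ℂ} {a : ℂ}, MeromorphicAt g a →
      MeromorphicAt (fun w => p.eval (g w) / q.eval (g w)) a :=
    fun hg => (hg.polynomial_eval p).div (hg.polynomial_eval q)
  refine isOpenMap_iff_nhds_le.2 fun x => ?_
  induction x using OnePoint.rec with
  | coe a =>
    refine nhds_le_map_of_eventuallyEq_meromorphicAt hcont.continuousAt (hmero (.id a)) ?_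
      (hf.finite_fiber hnc)
    filter_upwards [nhdsNE_le_cofinite a hroots.compl_mem_cofinite] with w hw using hpq w hw
  | infty =>
    rw [show (∞ : Sphere) = invSHomeomorph (0 : ℂ) by simp [invS]]
    refine nhds_le_map_of_comp_homeomorph invSHomeomorph
      (nhds_le_map_of_eventuallyEq_meromorphicAt (a := 0) (hcont.comp continuous_invS).continuousAt
        (hmero (MeromorphicAt.id 0).inv) ?_ fun y => ?_)
    · filter_upwards [self_mem_nhdsWithin,
        nhdsNE_le_cofinite 0 (hroots.preimage inv_injective.injOn).compl_mem_cofinite]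
        with w hw₀ hw
      simp [invS_coe_of_ne_zero hw₀, hpq _ hw]
    · refine (((hf.finite_fiber hnc y).preimage inv_injective.injOn).insert 0).subset
        fun w hw => ?_
      by_cases hw₀ : w = 0
      · exact .inl hw₀
      · exact .inr (by simpa [invS_coe_of_ne_zero hw₀] using hw)


section Normality

variable {G G' : Set (Sphere → Sphere)} {U V : Set Sphere}

lemma sm_self (x : Sphere) : sm x x = 0 := by
  cases x <;> simp [sm]

lemma NormalOn.mono (h : NormalOn G U) (hVU : V ⊆ U) : NormalOn G V :=
  fun F hF => (h F hF).imp fun _ ⟨hφ, l, hl⟩ => ⟨hφ, l, fun K hKV => hl K (hKV.trans hVU)⟩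

lemma NormalOn.anti (h : NormalOn G U) (hG : G' ⊆ G) : NormalOn G' U :=
  fun F hF => h F fun n => hG (hF n)

lemma normalOn_singleton (f : Sphere → Sphere) (U : Set Sphere) : NormalOn {f} U :=
  fun F hF => ⟨id, strictMono_id, f, fun _ _ _ ε hε =>
    ⟨0, fun n _ z _ => by simpa [show F n = f from hF n, sm_self] using hε⟩⟩

lemma NormalOn.iUnion {ι : Type*} [Finite ι] {G : ι → Set (Sphere → Sphere)}
    (h : ∀ i, NormalOn (G i) U) : NormalOn (⋃ i, G i) U := by
  intro F hF
  choose idx hidx using fun n => mem_iUnion.1 (hF n)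
  obtain ⟨i, hi⟩ := Finite.exists_infinite_fiber idx
  have hinf : {n | idx n = i}.Infinite := Set.infinite_coe_iff.1 hi
  obtain ⟨φ, hφ, l, hl⟩ := h i (F ∘ Nat.nth (idx · = i)) fun n => by
    simpa only [Function.comp_apply, Nat.nth_mem_of_infinite hinf n] using
      hidx (Nat.nth (idx · = i) n)
  exact ⟨Nat.nth (idx · = i) ∘ φ, (Nat.nth_strictMono hinf).comp hφ, l, hl⟩

lemma NormalOn.union (h : NormalOn G U) (h' : NormalOn G' U) : NormalOn (G ∪ G') U := by
  rw [union_eq_iUnion]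
  exact NormalOn.iUnion (Bool.forall_bool.2 ⟨h', h⟩)

lemma NormalOn.comp_right {g : Sphere → Sphere} (hg : Continuous g) (h : NormalOn G U) :
    NormalOn ((· ∘ g) '' G) (g ⁻¹' U) := by
  intro F hF
  choose H hHG hHF using hF
  obtain ⟨φ, hφ, l, hl⟩ := h H hHG
  refine ⟨φ, hφ, l ∘ g, fun K hKU hK ε hε => ?_⟩
  obtain ⟨N, hN⟩ := hl (g '' K) (image_subset_iff.2 hKU) (hK.image hg) ε hε
  exact ⟨N, fun n hn z hz => by rw [← hHF]; exact hN n hn (g z) (mem_image_of_mem g hz)⟩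

lemma NormalOn.image_of_comp_mem {g : Sphere → Sphere} (hg : Continuous g)
    (hG : ∀ h ∈ G, h ∘ g ∈ G') (h : NormalOn G' U) {C : Set Sphere} (hC : IsClosed C)
    (hCU : C ⊆ U) : NormalOn G (g '' C) := by
  intro F hF
  obtain ⟨φ, hφ, l, hl⟩ := h (fun n => F n ∘ g) fun n => hG _ (hF n)
  refine ⟨φ, hφ, l ∘ Function.invFunOn g C, fun K hKC hK ε hε => ?_⟩
  obtain ⟨N, hN⟩ := hl (g ⁻¹' K ∩ C) (inter_subset_right.trans hCU)
    ((hK.isClosed.preimage hg).inter hC).isCompact ε hε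
  refine ⟨N, fun n hn z hz => ?_⟩
  have hgz : g (Function.invFunOn g C z) = z := Function.invFunOn_eq (hKC hz)
  simpa [hgz] using hN n hn _ ⟨by rwa [mem_preimage, hgz], Function.invFunOn_mem (hKC hz)⟩

end Normality

theorem fatou_subset_preimage {G : Set (Sphere → Sphere)} {g : Sphere → Sphere}
    (hg : Continuous g) (hg_open : IsOpenMap g) (hG : ∀ h ∈ G, h ∘ g ∈ G) :
    Fatou G ⊆ g ⁻¹' Fatou G := by
  rintro z ⟨U, hU, hzU, hnorm⟩
  obtain ⟨C, hCz, hC, hCU⟩ := exists_mem_nhds_isClosed_subset (hU.mem_nhds hzU)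
  exact ⟨g '' interior C, hg_open _ isOpen_interior,
    mem_image_of_mem g (mem_interior_iff_mem_nhds.2 hCz),
    (hnorm.image_of_comp_mem hg hG hC hCU).mono (image_mono interior_subset)⟩

lemma semigroupGen.exists_eq_comp {α : Type*} {S : Set (α → α)} {f : α → α}
    (hf : semigroupGen S f) : ∃ s ∈ S, ∃ h, (h = id ∨ semigroupGen S h) ∧ f = h ∘ s := by
  induction hf with
  | base f hf => exact ⟨f, hf, id, .inl rfl, rfl⟩
  | comp f₁ f₂ h₁ _ _ ih₂ =>
    obtain ⟨s, hs, h, hh, rfl⟩ := ih₂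
    refine ⟨s, hs, f₁ ∘ h, .inr ?_, rfl⟩
    rcases hh with rfl | hh
    exacts [h₁, .comp _ _ h₁ hh]

theorem iInter_preimage_fatou_subset {ι : Type*} [Finite ι] {g : ι → Sphere → Sphere}
    (hg : ∀ i, Continuous (g i)) :
    ⋂ i, g i ⁻¹' Fatou {f | semigroupGen (range g) f} ⊆ Fatou {f | semigroupGen (range g) f} := by
  set G := {f | semigroupGen (range g) f}
  intro z hz
  choose U hU hzU hnorm using mem_iInter.1 hz
  refine ⟨⋂ i, g i ⁻¹' U i, isOpen_iInter_of_finite fun i => (hU i).preimage (hg i),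
    mem_iInter.2 hzU, ?_⟩
  have hG : G ⊆ ⋃ i, (· ∘ g i) '' ({id} ∪ G) := by
    intro f hf
    obtain ⟨_, ⟨i, rfl⟩, h, hh, rfl⟩ := semigroupGen.exists_eq_comp hf
    exact mem_iUnion.2 ⟨i, h, hh, rfl⟩
  exact (NormalOn.iUnion fun i => (((normalOn_singleton id _).union (hnorm i)).comp_right
    (hg i)).mono (iInter_subset _ i)).anti hG

/-- Backward self-similarity of the Julia set of a finitely generated
rational semigroup. -/
theorem stmt2 (N : ℕ) (g : Fin N → Sphere → Sphere)
    (hrat : ∀ i, IsRationalMap (g i)) (hnc : ∀ i, Nonconst (g i)) :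
    Julia {f | semigroupGen (Set.range g) f} =
      ⋃ i, g i ⁻¹' Julia {f | semigroupGen (Set.range g) f} ∧
    Fatou {f | semigroupGen (Set.range g) f} =
      ⋂ i, g i ⁻¹' Fatou {f | semigroupGen (Set.range g) f} := by
  set G := {f | semigroupGen (Set.range g) f}
  have hFatou : Fatou G = ⋂ i, g i ⁻¹' Fatou G :=
    (subset_iInter fun i => fatou_subset_preimage (hrat i).1 ((hrat i).isOpenMap (hnc i))
      fun h hh => semigroupGen.comp _ _ hh (.base _ (mem_range_self i))).antisymm
    (iInter_preimage_fatou_subset fun i => (hrat i).1)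
  refine ⟨?_, hFatou⟩
  calc Julia G = (⋂ i, g i ⁻¹' Fatou G)ᶜ := congrArg compl hFatou
    _ = ⋃ i, g i ⁻¹' Julia G := by rw [compl_iInter]; rfl
end

section
/- If g is a Möbius transformation, then the Lipschitz constant of g with respect to the spherical metric equals the Lipschitz constant of g⁻¹, i.e., Lip g = Lip g⁻¹. -/
open OnePoint Filter Topology Set

/-- The Lipschitz constant of a self-map of the sphere with respect to the
spherical metric. -/
noncomputable def lipConst (f : Sphere → Sphere) : ℝ :=
  sInf {M : ℝ | ∀ z w : Sphere, sm (f z) (f w) ≤ M * sm z w}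

/-!
An injective continuous Möbius map is the action of a matrix `A ∈ GL₂(ℂ)` on `OnePoint ℂ`: the
formula fixes it off the pole, continuity at the pole and injectivity at `∞`.
In homogeneous coordinates `v, w ∈ ℂ²` the chordal metric is `2 |det(v, w)| / (|v| |w|)`, so the
Möbius map with matrix `A` multiplies it by `λ(v, w) = |det A| |v| |w| / (|Av| |Aw|)`. Passing to
the orthogonal vectors `v⊥, w⊥` (the antipodal points) does not change the distance, and
Hadamard's inequality `|det A| |v|² = |det(Av, Av⊥)| ≤ |Av| |Av⊥|` gives
`λ(v, w) λ(v⊥, w⊥) ≤ 1`. So if the inverse map is `M`-Lipschitz, i.e. `1 / λ ≤ M` everywhere,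
then in particular `1 / λ(v⊥, w⊥) ≤ M`, whence `λ(v, w) ≤ M`: the map itself is `M`-Lipschitz.
-/

open Matrix Bornology
open scoped ComplexConjugate

noncomputable def homNorm (v : Fin 2 → ℂ) : ℝ := √(‖v 0‖ ^ 2 + ‖v 1‖ ^ 2)

def wedge (v w : Fin 2 → ℂ) : ℂ := v 0 * w 1 - v 1 * w 0

noncomputable def chordal (v w : Fin 2 → ℂ) : ℝ := 2 * ‖wedge v w‖ / (homNorm v * homNorm w)

/-- Spans the point antipodal to the one spanned by `v`. -/
def perp (v : Fin 2 → ℂ) : Fin 2 → ℂ := ![-conj (v 1), conj (v 0)]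

lemma homNorm_nonneg (v : Fin 2 → ℂ) : 0 ≤ homNorm v := Real.sqrt_nonneg _

lemma homNorm_pos {v : Fin 2 → ℂ} (hv : v ≠ 0) : 0 < homNorm v := by
  have : v 0 ≠ 0 ∨ v 1 ≠ 0 := by
    by_contra! h
    exact hv (funext fun i => by fin_cases i <;> simp [h.1, h.2])
  unfold homNorm
  rcases this with h | h <;> positivity

lemma homNorm_smul (t : ℂ) (v : Fin 2 → ℂ) : homNorm (t • v) = ‖t‖ * homNorm v := by
  simp only [homNorm, Pi.smul_apply, smul_eq_mul, norm_mul, mul_pow, ← mul_add]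
  rw [Real.sqrt_mul (by positivity), Real.sqrt_sq (norm_nonneg t)]

lemma homNorm_perp (v : Fin 2 → ℂ) : homNorm (perp v) = homNorm v := by
  simp [homNorm, perp, add_comm]

lemma perp_ne_zero {v : Fin 2 → ℂ} (hv : v ≠ 0) : perp v ≠ 0 := by
  intro h
  have h0 := congrFun h 0
  have h1 := congrFun h 1
  simp only [perp, cons_val_zero, cons_val_one, Pi.zero_apply, neg_eq_zero, map_eq_zero] at h0 h1
  exact hv (funext fun i => by fin_cases i <;> simp [h0, h1])

lemma wedge_smul (t u : ℂ) (v w : Fin 2 → ℂ) : wedge (t • v) (u • w) = t * u * wedge v w := by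
  simp only [wedge, Pi.smul_apply, smul_eq_mul]
  ring

lemma wedge_mulVec (A : Matrix (Fin 2) (Fin 2) ℂ) (v w : Fin 2 → ℂ) :
    wedge (A *ᵥ v) (A *ᵥ w) = A.det * wedge v w := by
  simp only [wedge, mulVec_fin_two, det_fin_two, cons_val_zero, cons_val_one]
  ring

lemma norm_wedge_le (v w : Fin 2 → ℂ) : ‖wedge v w‖ ≤ homNorm v * homNorm w := by
  rw [homNorm, homNorm, ← Real.sqrt_mul (by positivity)]
  apply Real.le_sqrt_of_sq_le
  have h := norm_sub_le (v 0 * w 1) (v 1 * w 0)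
  rw [norm_mul, norm_mul, ← wedge] at h
  nlinarith [mul_le_mul h h (norm_nonneg _) (by positivity),
    sq_nonneg (‖v 0‖ * ‖w 0‖ - ‖v 1‖ * ‖w 1‖)]

lemma norm_wedge_perp (v : Fin 2 → ℂ) : ‖wedge v (perp v)‖ = homNorm v ^ 2 := by
  have : wedge v (perp v) = ((‖v 0‖ ^ 2 + ‖v 1‖ ^ 2 : ℝ) : ℂ) := by
    simp only [wedge, perp, cons_val_zero, cons_val_one]
    push_cast
    rw [← Complex.mul_conj', ← Complex.mul_conj']
    ring
  rw [this, homNorm, Real.sq_sqrt (by positivity), Complex.norm_real,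
    Real.norm_of_nonneg (by positivity)]

lemma norm_det_mul_sq_le (A : Matrix (Fin 2) (Fin 2) ℂ) (v : Fin 2 → ℂ) :
    ‖A.det‖ * homNorm v ^ 2 ≤ homNorm (A *ᵥ v) * homNorm (A *ᵥ perp v) := by
  rw [← norm_wedge_perp, ← norm_mul, ← wedge_mulVec]
  exact norm_wedge_le _ _

lemma homNorm_mulVec_pos {A : Matrix (Fin 2) (Fin 2) ℂ} (hA : A.det ≠ 0) {v : Fin 2 → ℂ}
    (hv : v ≠ 0) : 0 < homNorm (A *ᵥ v) := by
  have : 0 < ‖A.det‖ * homNorm v ^ 2 := by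
    have := homNorm_pos hv
    positivity
  exact pos_of_mul_pos_left (this.trans_le (norm_det_mul_sq_le A v)) (homNorm_nonneg _)

lemma chordal_nonneg (v w : Fin 2 → ℂ) : 0 ≤ chordal v w := by
  have := homNorm_nonneg v
  have := homNorm_nonneg w
  unfold chordal
  positivity

lemma chordal_smul {t u : ℂ} (ht : t ≠ 0) (hu : u ≠ 0) (v w : Fin 2 → ℂ) :
    chordal (t • v) (u • w) = chordal v w := by
  have htu : ‖t‖ * ‖u‖ ≠ 0 := by positivity
  simp only [chordal, wedge_smul, homNorm_smul, norm_mul]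
  rw [← mul_div_mul_left (2 * ‖wedge v w‖) _ htu]
  ring_nf

lemma chordal_perp (v w : Fin 2 → ℂ) : chordal (perp v) (perp w) = chordal v w := by
  have : wedge (perp v) (perp w) = conj (wedge v w) := by
    simp only [wedge, perp, cons_val_zero, cons_val_one, map_sub, map_mul]
    ring
  rw [chordal, chordal, this, Complex.norm_conj, homNorm_perp, homNorm_perp]

lemma chordal_mulVec (A : Matrix (Fin 2) (Fin 2) ℂ) {v w : Fin 2 → ℂ} (hv : v ≠ 0)
    (hw : w ≠ 0) :
    chordal (A *ᵥ v) (A *ᵥ w) =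
      ‖A.det‖ * (homNorm v * homNorm w) / (homNorm (A *ᵥ v) * homNorm (A *ᵥ w)) *
        chordal v w := by
  have := homNorm_pos hv
  have := homNorm_pos hw
  rw [chordal, chordal, wedge_mulVec, norm_mul]
  field_simp

lemma chordal_mulVec_le_of_le {A : Matrix (Fin 2) (Fin 2) ℂ} (hA : A.det ≠ 0) {M : ℝ}
    (H : ∀ v w, v ≠ 0 → w ≠ 0 → chordal v w ≤ M * chordal (A *ᵥ v) (A *ᵥ w))
    {v w : Fin 2 → ℂ} (hv : v ≠ 0) (hw : w ≠ 0) :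
    chordal (A *ᵥ v) (A *ᵥ w) ≤ M * chordal v w := by
  have hvv := norm_det_mul_sq_le A v
  have hww := norm_det_mul_sq_le A w
  have hantipodal := H _ _ (perp_ne_zero hv) (perp_ne_zero hw)
  rw [chordal_mulVec A (perp_ne_zero hv) (perp_ne_zero hw), chordal_perp, homNorm_perp,
    homNorm_perp] at hantipodal
  rw [chordal_mulVec A hv hw]
  have hδ : 0 < ‖A.det‖ := norm_pos_iff.mpr hA
  have hn := homNorm_pos hv
  have hm := homNorm_pos hw
  have hx := homNorm_mulVec_pos hA hv
  have hy := homNorm_mulVec_pos hA hw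
  have hx' := homNorm_mulVec_pos hA (perp_ne_zero hv)
  have hy' := homNorm_mulVec_pos hA (perp_ne_zero hw)
  set δ := ‖A.det‖
  set n := homNorm v
  set m := homNorm w
  set x := homNorm (A *ᵥ v)
  set y := homNorm (A *ᵥ w)
  set x' := homNorm (A *ᵥ perp v)
  set y' := homNorm (A *ᵥ perp w)
  rcases (chordal_nonneg v w).eq_or_lt with h0 | hc
  · rw [← h0, mul_zero, mul_zero]
  rw [← mul_assoc, le_mul_iff_one_le_left hc, mul_div_assoc', one_le_div (by positivity)]
    at hantipodal
  gcongr
  rw [div_le_iff₀ (by positivity)]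
  refine le_of_mul_le_mul_right ?_ (by positivity : 0 < δ * (n * m))
  calc δ * (n * m) * (δ * (n * m)) = (δ * n ^ 2) * (δ * m ^ 2) := by ring
    _ ≤ (x * x') * (y * y') := mul_le_mul hvv hww (by positivity) (by positivity)
    _ = x * y * (x' * y') := by ring
    _ ≤ x * y * (M * (δ * (n * m))) := by gcongr
    _ = M * (x * y) * (δ * (n * m)) := by ring

/-- Homogeneous coordinates, the representatives used by `OnePoint.equivProjectivization`. -/
def homCoord : Sphere → Fin 2 → ℂ
  | (z : ℂ) => ![z, 1]
  | ∞ => ![1, 0]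

lemma homCoord_ne_zero (z : Sphere) : homCoord z ≠ 0 := by
  cases z <;> simp [homCoord]

open Projectivization in
lemma equivProjectivization_eq_mk_homCoord (z : Sphere) :
    equivProjectivization ℂ z = mk ℂ (homCoord z) (homCoord_ne_zero z) := by
  cases z <;> rfl

open Projectivization in
lemma exists_eq_smul_homCoord {v : Fin 2 → ℂ} (hv : v ≠ 0) :
    ∃ z : Sphere, ∃ t : ℂ, t ≠ 0 ∧ v = t • homCoord z := by
  obtain ⟨z, hz⟩ := (equivProjectivization ℂ).surjective (mk ℂ v hv)
  rw [equivProjectivization_eq_mk_homCoord, eq_comm, mk_eq_mk_iff'] at hz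
  obtain ⟨t, ht⟩ := hz
  exact ⟨z, t, by rintro rfl; simp [hv.symm] at ht, ht.symm⟩

open Projectivization in
lemma exists_homCoord_smul_eq (A : GL (Fin 2) ℂ) (z : Sphere) :
    ∃ t : ℂ, t ≠ 0 ∧
      homCoord (A • z) = t • ((A : Matrix (Fin 2) (Fin 2) ℂ) *ᵥ homCoord z) := by
  have h := equivProjectivization_smul (g := A) z
  rw [equivProjectivization_eq_mk_homCoord, equivProjectivization_eq_mk_homCoord, smul_mk,
    mk_eq_mk_iff'] at h
  obtain ⟨t, ht⟩ := h
  refine ⟨t, by rintro rfl; simp [homCoord_ne_zero, eq_comm] at ht, ?_⟩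
  rw [← ht, Units.smul_def, Matrix.smul_eq_mulVec]

lemma sm_eq_chordal (z w : Sphere) : sm z w = chordal (homCoord z) (homCoord w) := by
  cases z <;> cases w <;> simp [sm, chordal, homNorm, wedge, homCoord, add_comm]
  rw [Real.sqrt_mul (by positivity)]

lemma sm_smul_eq_chordal (A : GL (Fin 2) ℂ) (z w : Sphere) :
    sm (A • z) (A • w) =
      chordal ((A : Matrix (Fin 2) (Fin 2) ℂ) *ᵥ homCoord z) (A *ᵥ homCoord w) := by
  obtain ⟨t, ht, hz⟩ := exists_homCoord_smul_eq A z
  obtain ⟨u, hu, hw⟩ := exists_homCoord_smul_eq A w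
  rw [sm_eq_chordal, hz, hw, chordal_smul ht hu]

lemma sm_smul_le_iff (A : GL (Fin 2) ℂ) (M : ℝ) :
    (∀ z w, sm (A • z) (A • w) ≤ M * sm z w) ↔
      ∀ v w, v ≠ 0 → w ≠ 0 →
        chordal ((A : Matrix (Fin 2) (Fin 2) ℂ) *ᵥ v) (A *ᵥ w) ≤ M * chordal v w := by
  refine ⟨fun h v w hv hw => ?_, fun h z w => ?_⟩
  · obtain ⟨z, t, ht, rfl⟩ := exists_eq_smul_homCoord hv
    obtain ⟨z', u, hu, rfl⟩ := exists_eq_smul_homCoord hw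
    rw [mulVec_smul, mulVec_smul, chordal_smul ht hu, chordal_smul ht hu, ← sm_smul_eq_chordal,
      ← sm_eq_chordal]
    exact h z z'
  · rw [sm_smul_eq_chordal, sm_eq_chordal]
    exact h _ _ (homCoord_ne_zero z) (homCoord_ne_zero w)

lemma sm_smul_le_of_sm_inv_smul_le (A : GL (Fin 2) ℂ) {M : ℝ}
    (h : ∀ z w, sm (A⁻¹ • z) (A⁻¹ • w) ≤ M * sm z w) (z w : Sphere) :
    sm (A • z) (A • w) ≤ M * sm z w := by
  rw [sm_smul_le_iff] at h
  revert z w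
  rw [sm_smul_le_iff]
  intro v w hv hw
  refine chordal_mulVec_le_of_le A.det_ne_zero (fun v w hv hw => ?_) hv hw
  have hAv : (A : Matrix (Fin 2) (Fin 2) ℂ) *ᵥ v ≠ 0 := (smul_ne_zero_iff_ne A).mpr hv
  have hAw : (A : Matrix (Fin 2) (Fin 2) ℂ) *ᵥ w ≠ 0 := (smul_ne_zero_iff_ne A).mpr hw
  simpa only [mulVec_mulVec, Units.inv_mul, one_mulVec] using h _ _ hAv hAw

lemma lipConst_inv_smul (A : GL (Fin 2) ℂ) : lipConst (A⁻¹ • ·) = lipConst (A • ·) := by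
  unfold lipConst
  congr 1
  ext M
  simp only [Set.mem_ofPred_eq]
  exact ⟨fun h => sm_smul_le_of_sm_inv_smul_le A h,
    fun h => sm_smul_le_of_sm_inv_smul_le A⁻¹ (by simpa only [inv_inv] using h)⟩

lemma ne_zero_of_pole {a b c d p : ℂ} (hD : a * d - b * c ≠ 0) (hp : c * p + d = 0) : c ≠ 0 := by
  rintro rfl
  exact hD (by linear_combination a * hp)

lemma tendsto_moebius_nhdsNE_pole {a b c d p : ℂ} (hD : a * d - b * c ≠ 0)
    (hp : c * p + d = 0) :
    Tendsto (fun u => (a * u + b) / (c * u + d)) (𝓝[≠] p) (cobounded ℂ) := by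
  have hc := ne_zero_of_pole hD hp
  have hsub : Tendsto (fun u => u - p) (𝓝[≠] p) (𝓝[≠] 0) :=
    tendsto_nhdsWithin_iff.mpr
      ⟨((continuous_sub_right p).tendsto' p 0 (sub_self p)).mono_left nhdsWithin_le_nhds,
        eventually_nhdsWithin_of_forall fun u hu => sub_ne_zero.mpr hu⟩
  have hk : (b * c - a * d) / c ^ 2 ≠ 0 :=
    div_ne_zero (fun h => hD (by linear_combination -h)) (pow_ne_zero 2 hc)
  have hlim : Tendsto (fun u => a / c + (b * c - a * d) / c ^ 2 * (u - p)⁻¹) (𝓝[≠] p)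
      (cobounded ℂ) :=
    (tendsto_const_add_cobounded _).comp <|
      (tendsto_mul_left_cobounded hk).comp (tendsto_inv₀_nhdsNE_zero.comp hsub)
  refine hlim.congr' (eventually_nhdsWithin_of_forall fun u (hu : u ≠ p) => ?_)
  have : u - p ≠ 0 := sub_ne_zero.mpr hu
  show _ = (a * u + b) / (c * u + d)
  rw [show c * u + d = c * (u - p) by linear_combination hp]
  field_simp
  linear_combination (-a) * hp

lemma eq_infty_of_pole {f : Sphere → Sphere} (hcont : Continuous f) {a b c d : ℂ}
    (hD : a * d - b * c ≠ 0)
    (hform : ∀ z : ℂ, c * z + d ≠ 0 → f z = ↑((a * z + b) / (c * z + d)))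
    {p : ℂ} (hp : c * p + d = 0) : f p = ∞ := by
  have hc := ne_zero_of_pole hD hp
  have hf : Tendsto (fun u : ℂ => f u) (𝓝[≠] p) (𝓝 (f p)) :=
    ((hcont.tendsto _).comp (OnePoint.continuous_coe.tendsto p)).mono_left nhdsWithin_le_nhds
  have hinf : Tendsto (fun u : ℂ => f u) (𝓝[≠] p) (𝓝 ∞) := by
    refine (OnePoint.tendsto_coe_infty.comp ?_).congr'
      (eventually_nhdsWithin_of_forall fun u (hu : u ≠ p) => (hform u ?_).symm)
    · rw [coclosedCompact_eq_cocompact, ← Metric.cobounded_eq_cocompact]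
      exact tendsto_moebius_nhdsNE_pole hD hp
    · rw [show c * u + d = c * (u - p) by linear_combination hp]
      exact mul_ne_zero hc (sub_ne_zero.mpr hu)
  exact tendsto_nhds_unique hf hinf

lemma IsMoebius.exists_eq_smul {f : Sphere → Sphere} (hf : IsMoebius f)
    (hinj : Function.Injective f) : ∃ A : GL (Fin 2) ℂ, ∀ z, f z = A • z := by
  obtain ⟨hcont, a, b, c, d, hD, hform⟩ := hf
  let A : GL (Fin 2) ℂ := .mkOfDetNeZero !![a, b; c, d] (by simpa [det_fin_two] using hD)
  have hfin : ∀ u : ℂ, f u = A • (u : Sphere) := by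
    intro u
    rw [smul_some_eq_ite]
    simp only [A, GeneralLinearGroup.val_mkOfDetNeZero, of_apply, cons_val', cons_val_zero,
      cons_val_one, empty_val', cons_val_fin_one]
    split_ifs with hu
    · exact eq_infty_of_pole hcont hD hform hu
    · exact hform u hu
  refine ⟨A, fun z => ?_⟩
  induction z using OnePoint.rec with
  | coe u => exact hfin u
  | infty =>
    by_contra hne
    have hne' : A⁻¹ • f ∞ ≠ ∞ := fun h => hne (by rwa [inv_smul_eq_iff] at h)
    obtain ⟨v, hv⟩ := ne_infty_iff_exists.mp hne'
    rw [eq_inv_smul_iff, ← hfin] at hv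
    exact coe_ne_infty v (hinj hv)

/-- For a Möbius transformation `f` with inverse `g`,
`Lip f = Lip g`. -/
theorem stmt4 (f g : Sphere → Sphere) (hf : IsMoebius f)
    (hfg : f ∘ g = id) (hgf : g ∘ f = id) :
    lipConst f = lipConst g := by
  obtain ⟨A, hA⟩ := hf.exists_eq_smul (Function.LeftInverse.injective (congrFun hgf))
  have hf : f = (A • ·) := funext hA
  have hg : g = (A⁻¹ • ·) := funext fun z => by
    rw [eq_inv_smul_iff, ← hA]
    exact congrFun hfg z
  rw [hf, hg, lipConst_inv_smul]
end
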